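/- Combined gradient symmetrization bound (intermediate estimate in the proof of Theorem 2.1): For all U, V ∈ ℝ^{n×r} with ‖U‖_F ≤ σ and ‖V‖_F ≤ σ, setting Û = (U + V)/2, it holds that ‖∇f(UVᵀ)V + ∇f(VUᵀ)U − 2∇f(ÛÛᵀ)Û‖_F ≤ (L_0 σ³ + (3/2)Lσ)‖U − V‖_F². -/

import Mathlib

open Matrix
open scoped BigOperators

noncomputable section

/-- Frobenius inner product of two real matrices. -/
def frobInner {α β : Type*} [Fintype α] [Fintype β] (X Y : Matrix α β ℝ) : ℝ :=
  ∑ i, ∑ j, X i j * Y i j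

/-- Frobenius norm of a real matrix. -/
def frobNorm {α β : Type*} [Fintype α] [Fintype β] (X : Matrix α β ℝ) : ℝ :=
  Real.sqrt (∑ i, ∑ j, (X i j) ^ 2)

/-- Euclidean norm of a real vector. -/
def vecNorm {α : Type*} [Fintype α] (v : α → ℝ) : ℝ :=
  Real.sqrt (∑ i, (v i) ^ 2)

/-- The linear map `𝒜(X) = (⟨A 1, X⟩, …, ⟨A m, X⟩)`. -/
def Aop {n m : ℕ} (A : Fin m → Matrix (Fin n) (Fin n) ℝ)
    (X : Matrix (Fin n) (Fin n) ℝ) : Fin m → ℝ :=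
  fun i => frobInner (A i) X

/-- `s_A = Σ_i ‖A_i‖_F²`. -/
def sA {n m : ℕ} (A : Fin m → Matrix (Fin n) (Fin n) ℝ) : ℝ :=
  ∑ i, (frobNorm (A i)) ^ 2

/-- `(U, V, λ)` is an ε-KKT point of the penalized problem
`min f(UVᵀ) + (γ/2)‖U-V‖² s.t. 𝒜(UVᵀ) = b`, where `grad` denotes the gradient of `f`. -/
def IsPenEpsKKT {n m r : ℕ} (grad : Matrix (Fin n) (Fin n) ℝ → Matrix (Fin n) (Fin n) ℝ)
    (A : Fin m → Matrix (Fin n) (Fin n) ℝ) (b : Fin m → ℝ) (γ ε : ℝ)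
    (U V : Matrix (Fin n) (Fin r) ℝ) (lam : Fin m → ℝ) : Prop :=
  frobNorm (grad (U * Vᵀ) * V + γ • (U - V) + ∑ i, lam i • (A i * V)) ≤ ε ∧
  frobNorm (grad (V * Uᵀ) * U + γ • (V - U) + ∑ i, lam i • (A i * U)) ≤ ε ∧
  vecNorm (fun i => Aop A (U * Vᵀ) i - b i) ≤ ε

/-- `(U, λ)` is an ε-KKT point of the Burer–Monteiro problem
`min f(UUᵀ) s.t. 𝒜(UUᵀ) = b`, where `grad` denotes the gradient of `f`. -/
def IsBMEpsKKT {n m r : ℕ} (grad : Matrix (Fin n) (Fin n) ℝ → Matrix (Fin n) (Fin n) ℝ)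
    (A : Fin m → Matrix (Fin n) (Fin n) ℝ) (b : Fin m → ℝ) (ε : ℝ)
    (U : Matrix (Fin n) (Fin r) ℝ) (lam : Fin m → ℝ) : Prop :=
  frobNorm ((2 : ℝ) • (grad (U * Uᵀ) * U) + ∑ i, lam i • (A i * U)) ≤ ε ∧
  vecNorm (fun i => Aop A (U * Uᵀ) i - b i) ≤ ε

/-- The augmented Lagrangian `L_ρ(U,V,λ)` of the penalized problem. -/
def augL {n m r : ℕ} (f : Matrix (Fin n) (Fin n) ℝ → ℝ)
    (A : Fin m → Matrix (Fin n) (Fin n) ℝ) (b : Fin m → ℝ) (ρ γ : ℝ)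
    (U V : Matrix (Fin n) (Fin r) ℝ) (lam : Fin m → ℝ) : ℝ :=
  f (U * Vᵀ) + γ / 2 * (frobNorm (U - V)) ^ 2
    + ∑ i, lam i * (Aop A (U * Vᵀ) i - b i)
    + ρ / 2 * (vecNorm (fun i => Aop A (U * Vᵀ) i - b i)) ^ 2

/-- The level set `S_β` of the penalty function. -/
def Sset {n m r : ℕ} (f : Matrix (Fin n) (Fin n) ℝ → ℝ)
    (A : Fin m → Matrix (Fin n) (Fin n) ℝ) (b : Fin m → ℝ) (ρ₀ β : ℝ) :
    Set (Matrix (Fin n) (Fin r) ℝ × Matrix (Fin n) (Fin r) ℝ) :=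
  {p | f (p.1 * p.2ᵀ) + ρ₀ / 2 * (frobNorm (p.1 - p.2)) ^ 2
      + ρ₀ / 2 * (vecNorm (fun i => Aop A (p.1 * p.2ᵀ) i - b i)) ^ 2 ≤ β}

/-- `𝒞(U)`: the `nr × m` matrix whose `i`-th column is the vectorization of `A_i U`. -/
def Cmat {n m r : ℕ} (A : Fin m → Matrix (Fin n) (Fin n) ℝ)
    (U : Matrix (Fin n) (Fin r) ℝ) : Matrix (Fin n × Fin r) (Fin m) ℝ :=
  Matrix.of fun p i => (A i * U) p.1 p.2

/-- Smallest singular value of a real matrix, as the infimum of `‖Mx‖` over unit vectors. -/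
def sigmaMin {α β : Type*} [Fintype α] [Fintype β] (M : Matrix α β ℝ) : ℝ :=
  sInf {s | ∃ x : β → ℝ, vecNorm x = 1 ∧ s = vecNorm (M.mulVec x)}

/-- Norm of the full gradient of the augmented Lagrangian at `(U, V, λ)`
(for symmetric `f`, with `grad` the gradient of `f`). -/
def gradAugLNorm {n m r : ℕ} (grad : Matrix (Fin n) (Fin n) ℝ → Matrix (Fin n) (Fin n) ℝ)
    (A : Fin m → Matrix (Fin n) (Fin n) ℝ) (b : Fin m → ℝ) (ρ γ : ℝ)
    (U V : Matrix (Fin n) (Fin r) ℝ) (lam : Fin m → ℝ) : ℝ :=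
  Real.sqrt
    ((frobNorm (grad (U * Vᵀ) * V + γ • (U - V)
        + ∑ i, (lam i + ρ * (Aop A (U * Vᵀ) i - b i)) • (A i * V))) ^ 2
      + (frobNorm (grad (V * Uᵀ) * U + γ • (V - U)
        + ∑ i, (lam i + ρ * (Aop A (U * Vᵀ) i - b i)) • (A i * U))) ^ 2
      + (vecNorm (fun i => Aop A (U * Vᵀ) i - b i)) ^ 2)

/-- Distance between two primal-dual triples, induced by the Frobenius/Euclidean norms. -/
def tripDist {n m r : ℕ}
    (p q : Matrix (Fin n) (Fin r) ℝ × Matrix (Fin n) (Fin r) ℝ × (Fin m → ℝ)) : ℝ :=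
  Real.sqrt ((frobNorm (p.1 - q.1)) ^ 2 + (frobNorm (p.2.1 - q.2.1)) ^ 2
    + (vecNorm (fun i => p.2.2 i - q.2.2 i)) ^ 2)

/-- The set `𝒲` of KKT points of the penalized problem. -/
def KKTset {n m : ℕ} (r : ℕ) (grad : Matrix (Fin n) (Fin n) ℝ → Matrix (Fin n) (Fin n) ℝ)
    (A : Fin m → Matrix (Fin n) (Fin n) ℝ) (b : Fin m → ℝ) (γ : ℝ) :
    Set (Matrix (Fin n) (Fin r) ℝ × Matrix (Fin n) (Fin r) ℝ × (Fin m → ℝ)) :=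
  {p | IsPenEpsKKT grad A b γ 0 p.1 p.2.1 p.2.2}

/-!
Write `U = a + c`, `V = a - c` with `a = Û` and `c = (U - V)/2`. Then `UVᵀ = M + Δ` and
`VUᵀ = M - Δ` with `M = aaᵀ - ccᵀ` and the skew part `Δ = caᵀ - acᵀ`, and the quantity to bound
is `(∇f(M + Δ) + ∇f(M - Δ) - 2∇f(aaᵀ)) a + (∇f(M - Δ) - ∇f(M + Δ)) c`.
The second term is at most `2L‖Δ‖‖c‖`. In the first, `∇f(M) - ∇f(aaᵀ)` is at most `L‖c‖²`, and the
symmetric second difference `∇f(M + Δ) + ∇f(M - Δ) - 2∇f(M)` is at most `L₀‖Δ‖²`: along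
`t ↦ ∇f(M + tΔ) + ∇f(M - tΔ)` the derivative is `∇²f(M + tΔ)[Δ] - ∇²f(M - tΔ)[Δ]`, of norm at most
`2tL₀‖Δ‖²` because the segment `[M - Δ, M + Δ]` stays in the ball. Finally
`‖Δ‖ ≤ 2‖a‖‖c‖ ≤ σ‖U - V‖`.
-/

section SecondDifference

variable {F : Type*} [NormedAddCommGroup F] [NormedSpace ℝ F]

section LineDerivative

variable {E : Type*} [AddCommGroup E] [Module ℝ E] {g : E → F} {D : E → E → F}

lemma hasDerivAt_comp_add_smul_of_hasLineDerivAt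
    (hD : ∀ x v, HasLineDerivAt ℝ g (D x v) x v) (x v : E) (t : ℝ) :
    HasDerivAt (fun s : ℝ => g (x + s • v)) (D (x + t • v) v) t := by
  have h : HasDerivAt (fun s : ℝ => g (x + t • v + (s - t) • v)) (D (x + t • v) v) t :=
    HasDerivAt.comp_sub_const (f := fun s : ℝ => g (x + t • v + s • v)) t t
      (by rw [sub_self]; exact hD _ _)
  refine h.congr_of_eventuallyEq (Filter.Eventually.of_forall fun s => ?_)
  simp only [sub_smul, add_add_sub_cancel]

lemma map_neg_of_hasLineDerivAt (hD : ∀ x v, HasLineDerivAt ℝ g (D x v) x v) (x v : E) :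
    D x (-v) = -D x v :=
  (hD x (-v)).unique (by simpa using (hD x v).smul (-1))

end LineDerivative

theorem norm_second_difference_le {E : Type*} [SeminormedAddCommGroup E] [NormedSpace ℝ E]
    {g : E → F} {D : E → E → F}
    (hD : ∀ x v, HasLineDerivAt ℝ g (D x v) x v) {s : Set E} (hs : Convex ℝ s) {K : ℝ}
    (hLip : ∀ x ∈ s, ∀ y ∈ s, ∀ v, ‖D x v - D y v‖ ≤ K * ‖v‖ * ‖x - y‖)
    {x v : E} (hp : x + v ∈ s) (hm : x - v ∈ s) :
    ‖g (x + v) + g (x - v) - (2 : ℝ) • g x‖ ≤ K * ‖v‖ ^ 2 := by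
  set φ : ℝ → F := fun t => g (x + t • v) + g (x - t • v) - (2 : ℝ) • g x
  have hx : x ∈ s := by
    convert hs.add_smul_sub_mem hm hp (t := 1 / 2) (by norm_num) using 1
    module
  have hφ : ∀ t, HasDerivAt φ (D (x + t • v) v - D (x - t • v) v) t := by
    intro t
    have h := (hasDerivAt_comp_add_smul_of_hasLineDerivAt hD x v t).add
      (hasDerivAt_comp_add_smul_of_hasLineDerivAt hD x (-v) t)
    simp only [smul_neg, ← sub_eq_add_neg, map_neg_of_hasLineDerivAt hD] at h
    exact h.sub_const _
  have hbound : ∀ t ∈ Set.Ico (0 : ℝ) 1,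
      ‖D (x + t • v) v - D (x - t • v) v‖ ≤ K * ‖v‖ ^ 2 * (2 * t) := by
    rintro t ⟨ht0, ht1⟩
    have hpt : x + t • v ∈ s := by
      simpa using hs.add_smul_sub_mem hx hp ⟨ht0, ht1.le⟩
    have hmt : x - t • v ∈ s := by
      simpa [← sub_eq_add_neg] using hs.add_smul_sub_mem hx hm ⟨ht0, ht1.le⟩
    calc ‖D (x + t • v) v - D (x - t • v) v‖ ≤ K * ‖v‖ * ‖(x + t • v) - (x - t • v)‖ :=
          hLip _ hpt _ hmt v
      _ = K * ‖v‖ ^ 2 * (2 * t) := by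
          rw [add_sub_sub_cancel, ← two_smul ℝ, smul_smul, norm_smul,
            Real.norm_of_nonneg (by positivity)]
          ring
  have hB : ∀ t, HasDerivAt (fun t : ℝ => K * ‖v‖ ^ 2 * t ^ 2) (K * ‖v‖ ^ 2 * (2 * t)) t := by
    intro t
    simpa using (hasDerivAt_pow 2 t).const_mul (K * ‖v‖ ^ 2)
  have h0 : ‖φ 0‖ ≤ K * ‖v‖ ^ 2 * 0 ^ 2 := by simp [φ, two_smul]
  have h1 := image_norm_le_of_norm_deriv_right_le_deriv_boundary
    (fun t _ => (hφ t).continuousAt.continuousWithinAt) (fun t _ => (hφ t).hasDerivWithinAt)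
    h0 hB hbound (Set.right_mem_Icc.2 zero_le_one)
  simpa [φ] using h1

end SecondDifference

lemma norm_le_of_norm_add_le_of_norm_sub_le {E : Type*} [SeminormedAddCommGroup E]
    [NormedSpace ℝ E] {a c : E} {σ : ℝ} (hp : ‖a + c‖ ≤ σ) (hm : ‖a - c‖ ≤ σ) : ‖a‖ ≤ σ := by
  have h : a = (2 : ℝ)⁻¹ • ((a + c) + (a - c)) := by module
  rw [h, norm_smul, Real.norm_of_nonneg (by norm_num)]
  linarith [norm_add_le (a + c) (a - c)]

attribute [local instance] Matrix.frobeniusNormedAddCommGroup Matrix.frobeniusNormedSpace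

lemma frobNorm_eq_norm {m n : Type*} [Fintype m] [Fintype n] (A : Matrix m n ℝ) :
    frobNorm A = ‖A‖ := by
  rw [frobNorm, Matrix.frobenius_norm_def, Real.sqrt_eq_rpow]
  simp only [Real.norm_eq_abs, sq_abs, Real.rpow_two]

lemma Matrix.hasLineDerivAt_of_hasDerivAt_apply {E m n : Type*} [AddCommGroup E] [Module ℝ E]
    [Fintype m] [Fintype n] {g : E → Matrix m n ℝ} {g' : Matrix m n ℝ} {x v : E}
    (h : ∀ i j, HasDerivAt (fun t : ℝ => g (x + t • v) i j) (g' i j) 0) :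
    HasLineDerivAt ℝ g g' x v :=
  hasDerivAt_pi.2 fun i => hasDerivAt_pi.2 fun j => h i j

namespace Matrix

lemma add_mul_sub_transpose {n r R : Type*} [Fintype r] [CommRing R] (a c : Matrix n r R) :
    (a + c) * (a - c)ᵀ = (a * aᵀ - c * cᵀ) + (c * aᵀ - a * cᵀ) := by
  simp only [transpose_sub, Matrix.add_mul, Matrix.mul_sub]
  abel

lemma sub_mul_add_transpose {n r R : Type*} [Fintype r] [CommRing R] (a c : Matrix n r R) :
    (a - c) * (a + c)ᵀ = (a * aᵀ - c * cᵀ) - (c * aᵀ - a * cᵀ) := by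
  simp only [transpose_add, Matrix.sub_mul, Matrix.mul_add]
  abel

variable {m n r : Type*} [Fintype m] [Fintype n] [Fintype r]

lemma norm_mul_transpose_le (a : Matrix m r ℝ) (b : Matrix n r ℝ) : ‖a * bᵀ‖ ≤ ‖a‖ * ‖b‖ :=
  (frobenius_norm_mul a bᵀ).trans_eq (by rw [frobenius_norm_transpose])

lemma norm_mul_transpose_le_sq {a : Matrix m r ℝ} {b : Matrix n r ℝ} {σ : ℝ} (ha : ‖a‖ ≤ σ)
    (hb : ‖b‖ ≤ σ) : ‖a * bᵀ‖ ≤ σ ^ 2 :=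
  (norm_mul_transpose_le a b).trans
    (by rw [sq]; exact mul_le_mul ha hb (norm_nonneg _) ((norm_nonneg _).trans ha))

lemma norm_mul_transpose_sub_le (a c : Matrix n r ℝ) : ‖c * aᵀ - a * cᵀ‖ ≤ 2 * ‖a‖ * ‖c‖ := by
  linarith [norm_sub_le (c * aᵀ) (a * cᵀ), norm_mul_transpose_le c a, norm_mul_transpose_le a c,
    mul_comm ‖a‖ ‖c‖]

end Matrix

section SymmetrizedGradient

variable {n r : Type*} [Fintype n] [Fintype r] {grad : Matrix n n ℝ → Matrix n n ℝ}
  {hess : Matrix n n ℝ → Matrix n n ℝ → Matrix n n ℝ} {σ L L0 : ℝ}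

lemma norm_grad_add_grad_sub_two_smul_le
    (hD : ∀ X H, HasLineDerivAt ℝ grad (hess X H) X H)
    (hgradLip : ∀ X Y : Matrix n n ℝ, ‖X‖ ≤ σ ^ 2 → ‖Y‖ ≤ σ ^ 2 →
      ‖grad X - grad Y‖ ≤ L * ‖X - Y‖)
    (hhessLip : ∀ X Y H : Matrix n n ℝ, ‖X‖ ≤ σ ^ 2 → ‖Y‖ ≤ σ ^ 2 →
      ‖hess X H - hess Y H‖ ≤ L0 * ‖H‖ * ‖X - Y‖)
    (hL : 0 ≤ L) {a c : Matrix n r ℝ} (hp : ‖a + c‖ ≤ σ) (hm : ‖a - c‖ ≤ σ) :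
    ‖grad ((a + c) * (a - c)ᵀ) + grad ((a - c) * (a + c)ᵀ) - (2 : ℝ) • grad (a * aᵀ)‖
      ≤ L0 * ‖c * aᵀ - a * cᵀ‖ ^ 2 + 2 * L * ‖c‖ ^ 2 := by
  have hP := norm_mul_transpose_le_sq hp hm
  have hQ := norm_mul_transpose_le_sq hm hp
  have ha := norm_le_of_norm_add_le_of_norm_sub_le hp hm
  rw [add_mul_sub_transpose] at hP ⊢
  rw [sub_mul_add_transpose] at hQ ⊢
  set M := a * aᵀ - c * cᵀ
  set Δ := c * aᵀ - a * cᵀ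
  have hsecond : ‖grad (M + Δ) + grad (M - Δ) - (2 : ℝ) • grad M‖ ≤ L0 * ‖Δ‖ ^ 2 :=
    norm_second_difference_le hD (convex_closedBall 0 (σ ^ 2))
      (fun X hX Y hY H => hhessLip X Y H (mem_closedBall_zero_iff.1 hX)
        (mem_closedBall_zero_iff.1 hY))
      (mem_closedBall_zero_iff.2 hP) (mem_closedBall_zero_iff.2 hQ)
  have hfirst : ‖grad M - grad (a * aᵀ)‖ ≤ L * ‖c‖ ^ 2 := by
    refine (hgradLip M _ (norm_le_of_norm_add_le_of_norm_sub_le hP hQ)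
      (norm_mul_transpose_le_sq ha ha)).trans ?_
    rw [show M - a * aᵀ = -(c * cᵀ) by simp only [M]; abel, norm_neg, sq]
    exact mul_le_mul_of_nonneg_left (norm_mul_transpose_le c c) hL
  calc ‖grad (M + Δ) + grad (M - Δ) - (2 : ℝ) • grad (a * aᵀ)‖
      = ‖(grad (M + Δ) + grad (M - Δ) - (2 : ℝ) • grad M)
          + (2 : ℝ) • (grad M - grad (a * aᵀ))‖ := by congr 1; module
    _ ≤ L0 * ‖Δ‖ ^ 2 + 2 * (L * ‖c‖ ^ 2) := by
        refine (norm_add_le _ _).trans (add_le_add hsecond ?_)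
        rw [norm_smul, Real.norm_two]
        exact mul_le_mul_of_nonneg_left hfirst zero_le_two
    _ = L0 * ‖Δ‖ ^ 2 + 2 * L * ‖c‖ ^ 2 := by ring

lemma norm_grad_sub_grad_le
    (hgradLip : ∀ X Y : Matrix n n ℝ, ‖X‖ ≤ σ ^ 2 → ‖Y‖ ≤ σ ^ 2 →
      ‖grad X - grad Y‖ ≤ L * ‖X - Y‖)
    {a c : Matrix n r ℝ} (hp : ‖a + c‖ ≤ σ) (hm : ‖a - c‖ ≤ σ) :
    ‖grad ((a - c) * (a + c)ᵀ) - grad ((a + c) * (a - c)ᵀ)‖ ≤ 2 * L * ‖c * aᵀ - a * cᵀ‖ := by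
  refine (hgradLip _ _ (norm_mul_transpose_le_sq hm hp)
    (norm_mul_transpose_le_sq hp hm)).trans_eq ?_
  rw [sub_mul_add_transpose, add_mul_sub_transpose,
    show ∀ M Δ : Matrix n n ℝ, M - Δ - (M + Δ) = -((2 : ℝ) • Δ) from fun M Δ => by module,
    norm_neg, norm_smul, Real.norm_two]
  ring

lemma norm_symmetrized_gradient_le
    (hD : ∀ X H, HasLineDerivAt ℝ grad (hess X H) X H)
    (hgradLip : ∀ X Y : Matrix n n ℝ, ‖X‖ ≤ σ ^ 2 → ‖Y‖ ≤ σ ^ 2 →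
      ‖grad X - grad Y‖ ≤ L * ‖X - Y‖)
    (hhessLip : ∀ X Y H : Matrix n n ℝ, ‖X‖ ≤ σ ^ 2 → ‖Y‖ ≤ σ ^ 2 →
      ‖hess X H - hess Y H‖ ≤ L0 * ‖H‖ * ‖X - Y‖)
    (hL : 0 ≤ L) (hL0 : 0 ≤ L0) {a c : Matrix n r ℝ} (hp : ‖a + c‖ ≤ σ) (hm : ‖a - c‖ ≤ σ) :
    ‖grad ((a + c) * (a - c)ᵀ) * (a - c) + grad ((a - c) * (a + c)ᵀ) * (a + c)
        - (2 : ℝ) • (grad (a * aᵀ) * a)‖ ≤ (4 * L0 * σ ^ 3 + 6 * L * σ) * ‖c‖ ^ 2 := by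
  set G₁ := grad ((a + c) * (a - c)ᵀ)
  set G₂ := grad ((a - c) * (a + c)ᵀ)
  set G₀ := grad (a * aᵀ)
  have ha := norm_le_of_norm_add_le_of_norm_sub_le hp hm
  have hσ : 0 ≤ σ := (norm_nonneg _).trans hp
  have hΔ : ‖c * aᵀ - a * cᵀ‖ ≤ 2 * σ * ‖c‖ :=
    (norm_mul_transpose_sub_le a c).trans (by gcongr)
  have hsym : ‖G₁ + G₂ - (2 : ℝ) • G₀‖ ≤ L0 * (2 * σ * ‖c‖) ^ 2 + 2 * L * ‖c‖ ^ 2 :=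
    (norm_grad_add_grad_sub_two_smul_le hD hgradLip hhessLip hL hp hm).trans (by gcongr)
  have hanti : ‖G₂ - G₁‖ ≤ 2 * L * (2 * σ * ‖c‖) :=
    (norm_grad_sub_grad_le hgradLip hp hm).trans (by gcongr)
  have hdecomp : G₁ * (a - c) + G₂ * (a + c) - (2 : ℝ) • (G₀ * a)
      = (G₁ + G₂ - (2 : ℝ) • G₀) * a + (G₂ - G₁) * c := by
    simp only [Matrix.mul_add, Matrix.mul_sub, Matrix.add_mul, Matrix.sub_mul, Matrix.smul_mul]
    abel
  calc ‖G₁ * (a - c) + G₂ * (a + c) - (2 : ℝ) • (G₀ * a)‖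
      ≤ ‖G₁ + G₂ - (2 : ℝ) • G₀‖ * ‖a‖ + ‖G₂ - G₁‖ * ‖c‖ := by
        rw [hdecomp]
        exact (norm_add_le _ _).trans
          (add_le_add (frobenius_norm_mul _ _) (frobenius_norm_mul _ _))
    _ ≤ (L0 * (2 * σ * ‖c‖) ^ 2 + 2 * L * ‖c‖ ^ 2) * σ + 2 * L * (2 * σ * ‖c‖) * ‖c‖ := by
        gcongr
    _ = (4 * L0 * σ ^ 3 + 6 * L * σ) * ‖c‖ ^ 2 := by ring

end SymmetrizedGradient

theorem combined_gradient_symmetrization_bound_general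
    (n r : ℕ)
    (grad : Matrix (Fin n) (Fin n) ℝ → Matrix (Fin n) (Fin n) ℝ)
    (hess : Matrix (Fin n) (Fin n) ℝ → Matrix (Fin n) (Fin n) ℝ → Matrix (Fin n) (Fin n) ℝ)
    (hhess : ∀ X H : Matrix (Fin n) (Fin n) ℝ, ∀ i j,
      HasDerivAt (fun t : ℝ => grad (X + t • H) i j) (hess X H i j) 0)
    (σ L L0 : ℝ) (hL : 0 < L) (hL0 : 0 < L0)
    (hgradLip : ∀ X Y : Matrix (Fin n) (Fin n) ℝ, frobNorm X ≤ σ ^ 2 → frobNorm Y ≤ σ ^ 2 →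
      frobNorm (grad X - grad Y) ≤ L * frobNorm (X - Y))
    (hhessLip : ∀ X Y H : Matrix (Fin n) (Fin n) ℝ, frobNorm X ≤ σ ^ 2 → frobNorm Y ≤ σ ^ 2 →
      frobNorm (hess X H - hess Y H) ≤ L0 * frobNorm H * frobNorm (X - Y))
    (U V : Matrix (Fin n) (Fin r) ℝ) (hU : frobNorm U ≤ σ) (hV : frobNorm V ≤ σ)
    (Uh : Matrix (Fin n) (Fin r) ℝ) (hUh : Uh = (2 : ℝ)⁻¹ • (U + V)) :
    frobNorm (grad (U * Vᵀ) * V + grad (V * Uᵀ) * U - (2 : ℝ) • (grad (Uh * Uhᵀ) * Uh))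
      ≤ (L0 * σ ^ 3 + 3 / 2 * L * σ) * (frobNorm (U - V)) ^ 2 := by
  simp only [frobNorm_eq_norm] at hgradLip hhessLip hU hV ⊢
  set c : Matrix (Fin n) (Fin r) ℝ := (2 : ℝ)⁻¹ • (U - V)
  have hU' : U = Uh + c := by rw [hUh]; module
  have hV' : V = Uh - c := by rw [hUh]; module
  have hUV : ‖U - V‖ = 2 * ‖c‖ := by
    rw [norm_smul, Real.norm_of_nonneg (by norm_num)]; ring
  have key := norm_symmetrized_gradient_le
    (fun X H => Matrix.hasLineDerivAt_of_hasDerivAt_apply (hhess X H)) hgradLip hhessLip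
    hL.le hL0.le (hU' ▸ hU) (hV' ▸ hV)
  rw [← hU', ← hV'] at key
  rw [hUV]
  linarith

/-- intermediate estimate in the proof of Theorem 2.1:
combined gradient symmetrization bound. -/
theorem combined_gradient_symmetrization_bound
    (n r : ℕ) (hn : 0 < n) (hr : 0 < r)
    (f : Matrix (Fin n) (Fin n) ℝ → ℝ)
    (grad : Matrix (Fin n) (Fin n) ℝ → Matrix (Fin n) (Fin n) ℝ)
    (hgrad : ∀ X H : Matrix (Fin n) (Fin n) ℝ,
      HasDerivAt (fun t : ℝ => f (X + t • H)) (frobInner (grad X) H) 0)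
    (hgradCont : Continuous grad)
    (hess : Matrix (Fin n) (Fin n) ℝ → Matrix (Fin n) (Fin n) ℝ → Matrix (Fin n) (Fin n) ℝ)
    (hhess : ∀ X H : Matrix (Fin n) (Fin n) ℝ, ∀ i j,
      HasDerivAt (fun t : ℝ => grad (X + t • H) i j) (hess X H i j) 0)
    (hhessCont : ∀ H : Matrix (Fin n) (Fin n) ℝ, Continuous (fun X => hess X H))
    (σ L L0 : ℝ) (hσ : 0 < σ) (hL : 0 < L) (hL0 : 0 < L0)
    (hgradLip : ∀ X Y : Matrix (Fin n) (Fin n) ℝ, frobNorm X ≤ σ ^ 2 → frobNorm Y ≤ σ ^ 2 →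
      frobNorm (grad X - grad Y) ≤ L * frobNorm (X - Y))
    (hhessLip : ∀ X Y H : Matrix (Fin n) (Fin n) ℝ, frobNorm X ≤ σ ^ 2 → frobNorm Y ≤ σ ^ 2 →
      frobNorm (hess X H - hess Y H) ≤ L0 * frobNorm H * frobNorm (X - Y))
    (U V : Matrix (Fin n) (Fin r) ℝ) (hU : frobNorm U ≤ σ) (hV : frobNorm V ≤ σ)
    (Uh : Matrix (Fin n) (Fin r) ℝ) (hUh : Uh = (2 : ℝ)⁻¹ • (U + V)) :
    frobNorm (grad (U * Vᵀ) * V + grad (V * Uᵀ) * U - (2 : ℝ) • (grad (Uh * Uhᵀ) * Uh))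
      ≤ (L0 * σ ^ 3 + 3 / 2 * L * σ) * (frobNorm (U - V)) ^ 2 :=
  combined_gradient_symmetrization_bound_general n r grad hess hhess σ L L0 hL hL0 hgradLip hhessLip
    U V hU hV Uh hUh
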